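/- Let d = 2, α = 1/2. For an integer N ≥ 1 and 0 ≤ i ≤ N², define the Hardy constant B₊(N,i) = max over integers x with i < x ≤ N² of ( ∑_{y=i+1}^{x} exp(y^{1/2}) (max(y,1))^{-1/2} ) · ( ∑_{y=x}^{N²} exp(-y^{1/2}) ). Then there exists k ≥ 1 such that for all N ≥ 1: B₊(N,i) ≤ k N for every 0 ≤ i < N², and B₊(N,0) ≥ N/k. -/
import Mathlib


/-!
Hardy constant `B₊` of the birth-and-death toy model in dimension `d = 2`
(i.e. `α = 1/2`): it is of order `N` on the state space `{0,…,N²}`.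
-/

noncomputable section

/-- The Hardy constant
`B₊(N,i) = max_{i < x ≤ N²} (∑_{y=i+1}^x e^{y^{1/2}} (max(y,1))^{-1/2}) ·
(∑_{y=x}^{N²} e^{-y^{1/2}})`. -/
def Bplus (N i : ℕ) : ℝ :=
  sSup ((fun x : ℕ =>
      (∑ y ∈ Finset.Icc (i + 1) x,
        Real.exp ((y : ℝ) ^ (1 / 2 : ℝ)) * ((max y 1 : ℕ) : ℝ) ^ (-(1 / 2 : ℝ))) *
      (∑ y ∈ Finset.Icc x (N ^ 2), Real.exp (-(y : ℝ) ^ (1 / 2 : ℝ)))) ''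
    {x : ℕ | i < x ∧ x ≤ N ^ 2})

open Finset in

/-- telescoping sum over an `Icc`. -/
private lemma tele (f : ℕ → ℝ) (a b : ℕ) (h : a ≤ b + 1) :
    ∑ y ∈ Finset.Icc a b, (f y - f (y + 1)) = f a - f (b + 1) := by
  rw [← Finset.Ico_add_one_right_eq_Icc, Finset.sum_Ico_eq_sum_range]
  have h2 := Finset.sum_range_sub' (fun i => f (a + i)) (b + 1 - a)
  simp only [Nat.add_zero] at h2
  have h3 : a + (b + 1 - a) = b + 1 := by omega
  rw [h3] at h2
  simpa [Nat.add_assoc] using h2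

private lemma sqrt_succ_le {a : ℝ} (ha : 0 ≤ a) : Real.sqrt (a + 1) ≤ Real.sqrt a + 1 := by
  have h : a + 1 ≤ (Real.sqrt a + 1) ^ 2 := by
    have := Real.sq_sqrt ha
    nlinarith [Real.sqrt_nonneg a]
  calc Real.sqrt (a + 1) ≤ Real.sqrt ((Real.sqrt a + 1) ^ 2) := Real.sqrt_le_sqrt h
    _ = Real.sqrt a + 1 := Real.sqrt_sq (by positivity)

private lemma step1 {s t : ℝ} (hs : 1 ≤ s) (ht : 0 ≤ t) (h : t ^ 2 = s ^ 2 + 1) :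
    Real.exp s * s⁻¹ ≤ 3 * (Real.exp t - Real.exp s) := by
  have hs0 : (0:ℝ) < s := by linarith
  have hst : s ≤ t := by nlinarith
  have h2s : t ≤ 2 * s := by nlinarith
  have hkey : 1 ≤ 3 * (s * (t - s)) := by nlinarith [sq_nonneg (t - s), sq_nonneg (t + s)]
  have h1 : Real.exp s * (t - s + 1) ≤ Real.exp t := by
    calc Real.exp s * (t - s + 1) ≤ Real.exp s * Real.exp (t - s) :=
          mul_le_mul_of_nonneg_left (Real.add_one_le_exp _) (Real.exp_pos s).le
      _ = Real.exp t := by rw [← Real.exp_add]; ring_nf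
  have hinv : s⁻¹ ≤ 3 * (t - s) := by
    rw [inv_eq_one_div, div_le_iff₀ hs0]
    nlinarith
  calc Real.exp s * s⁻¹ ≤ Real.exp s * (3 * (t - s)) :=
        mul_le_mul_of_nonneg_left hinv (Real.exp_pos s).le
    _ ≤ 3 * (Real.exp t - Real.exp s) := by nlinarith [h1]

private lemma step2 {r s : ℝ} (hr : 0 ≤ r) (hs : 1 ≤ s) (h : s ^ 2 = r ^ 2 + 1) :
    Real.exp (-s) ≤ 2 * ((r + 2) * Real.exp (-r) - (s + 2) * Real.exp (-s)) := by
  have hrs : r < s := by nlinarith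
  have hs1 : s ≤ r + 1 := by nlinarith
  have hprod : (s - r) * (s + r) = 1 := by nlinarith
  have hkey : 1 / 2 ≤ (r + 1) * (s - r) := by nlinarith [mul_pos (sub_pos.mpr hrs) (by linarith : (0:ℝ) < s + r)]
  have h1 : (s - r + 1) * Real.exp (-s) ≤ Real.exp (-r) := by
    calc (s - r + 1) * Real.exp (-s) ≤ Real.exp (s - r) * Real.exp (-s) :=
          mul_le_mul_of_nonneg_right (Real.add_one_le_exp _) (Real.exp_pos _).le
      _ = Real.exp (-r) := by rw [← Real.exp_add]; ring_nf
  have h2 : (1/2) * Real.exp (-s) ≤ ((r + 1) * (s - r)) * Real.exp (-s) :=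
    mul_le_mul_of_nonneg_right hkey (Real.exp_pos _).le
  nlinarith [mul_le_mul_of_nonneg_left h1 (by linarith : (0:ℝ) ≤ r + 2)]

private lemma term_rw {y : ℕ} (hy : 1 ≤ y) :
    Real.exp ((y : ℝ) ^ (1 / 2 : ℝ)) * ((max y 1 : ℕ) : ℝ) ^ (-(1 / 2 : ℝ)) =
      Real.exp (Real.sqrt y) * (Real.sqrt y)⁻¹ := by
  rw [max_eq_left hy, Real.rpow_neg (Nat.cast_nonneg y), ← Real.sqrt_eq_rpow]

private lemma sum1_le (x : ℕ) :
    ∑ y ∈ Finset.Icc 1 x, Real.exp (Real.sqrt y) * (Real.sqrt y)⁻¹ ≤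
      3 * Real.exp (Real.sqrt ((x + 1 : ℕ) : ℝ)) := by
  have h := tele (fun y : ℕ => -(3 * Real.exp (Real.sqrt y))) 1 x (by omega)
  have hle : ∑ y ∈ Finset.Icc 1 x, Real.exp (Real.sqrt y) * (Real.sqrt y)⁻¹ ≤
      ∑ y ∈ Finset.Icc 1 x, (-(3 * Real.exp (Real.sqrt y)) - -(3 * Real.exp (Real.sqrt ((y+1 : ℕ) : ℝ)))) := by
    apply Finset.sum_le_sum
    intro y hy
    have hy1 : 1 ≤ y := (Finset.mem_Icc.mp hy).1
    have h1y : (1:ℝ) ≤ (y : ℝ) := by exact_mod_cast hy1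
    have hs : 1 ≤ Real.sqrt (y : ℝ) := Real.one_le_sqrt.mpr h1y
    have hsq : Real.sqrt ((y+1 : ℕ) : ℝ) ^ 2 = Real.sqrt (y:ℝ) ^ 2 + 1 := by
      rw [Real.sq_sqrt (by positivity), Real.sq_sqrt (by positivity)]
      push_cast; ring
    have := step1 hs (Real.sqrt_nonneg _) hsq
    linarith
  rw [h] at hle
  have : (0:ℝ) < Real.exp (Real.sqrt ((1:ℕ):ℝ)) := Real.exp_pos _
  calc ∑ y ∈ Finset.Icc 1 x, Real.exp (Real.sqrt y) * (Real.sqrt y)⁻¹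
      ≤ -(3 * Real.exp (Real.sqrt ((1:ℕ):ℝ))) - -(3 * Real.exp (Real.sqrt ((x+1 : ℕ) : ℝ))) := hle
    _ ≤ 3 * Real.exp (Real.sqrt ((x + 1 : ℕ) : ℝ)) := by linarith

private lemma sum2_le (x M : ℕ) (hx : 1 ≤ x) (hxM : x ≤ M + 1) :
    ∑ y ∈ Finset.Icc x M, Real.exp (-Real.sqrt (y : ℝ)) ≤
      2 * ((Real.sqrt ((x - 1 : ℕ) : ℝ) + 2) * Real.exp (-Real.sqrt ((x - 1 : ℕ) : ℝ))) := by
  set g : ℕ → ℝ := fun y => 2 * ((Real.sqrt ((y - 1 : ℕ) : ℝ) + 2) * Real.exp (-Real.sqrt ((y - 1 : ℕ) : ℝ))) with hg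
  have h := tele g x M hxM
  have hle : ∑ y ∈ Finset.Icc x M, Real.exp (-Real.sqrt (y : ℝ)) ≤
      ∑ y ∈ Finset.Icc x M, (g y - g (y + 1)) := by
    apply Finset.sum_le_sum
    intro y hy
    have hy1 : 1 ≤ y := le_trans hx (Finset.mem_Icc.mp hy).1
    have h1y : (1:ℝ) ≤ (y : ℝ) := by exact_mod_cast hy1
    have hs : 1 ≤ Real.sqrt (y : ℝ) := Real.one_le_sqrt.mpr h1y
    have hcast : ((y - 1 : ℕ) : ℝ) = (y : ℝ) - 1 := by
      have := Nat.cast_sub hy1 (R := ℝ); simpa using this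
    have hsq : Real.sqrt ((y:ℕ) : ℝ) ^ 2 = Real.sqrt ((y - 1 : ℕ) : ℝ) ^ 2 + 1 := by
      rw [Real.sq_sqrt (by positivity), Real.sq_sqrt (by positivity), hcast]; ring
    have hstep := step2 (Real.sqrt_nonneg ((y - 1 : ℕ) : ℝ)) hs hsq
    have hsimp : (y + 1 - 1 : ℕ) = y := by omega
    simp only [hg, hsimp]
    linarith [hstep]
  rw [h] at hle
  have hgpos : 0 ≤ g (M + 1) := by
    simp only [hg]; positivity
  calc ∑ y ∈ Finset.Icc x M, Real.exp (-Real.sqrt (y : ℝ)) ≤ g x - g (M + 1) := hle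
    _ ≤ g x := by linarith
    _ = 2 * ((Real.sqrt ((x - 1 : ℕ) : ℝ) + 2) * Real.exp (-Real.sqrt ((x - 1 : ℕ) : ℝ))) := rfl

private lemma exp_two_le : Real.exp 2 ≤ 8 := by
  have h1 : Real.exp 2 = Real.exp 1 * Real.exp 1 := by
    rw [← Real.exp_add]; norm_num
  nlinarith [Real.exp_one_lt_d9, Real.exp_pos 1]

private lemma value_le (N x i : ℕ) (hx1 : 1 ≤ x) (hx2 : x ≤ N ^ 2) (hN : 1 ≤ N) :
    (∑ y ∈ Finset.Icc (i + 1) x,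
        Real.exp ((y : ℝ) ^ (1 / 2 : ℝ)) * ((max y 1 : ℕ) : ℝ) ^ (-(1 / 2 : ℝ))) *
      (∑ y ∈ Finset.Icc x (N ^ 2), Real.exp (-(y : ℝ) ^ (1 / 2 : ℝ))) ≤ 200 * N := by
  set u := Real.sqrt ((x - 1 : ℕ) : ℝ) with hu
  set v := Real.sqrt ((x + 1 : ℕ) : ℝ) with hv
  have hS1 : (∑ y ∈ Finset.Icc (i + 1) x,
      Real.exp ((y : ℝ) ^ (1 / 2 : ℝ)) * ((max y 1 : ℕ) : ℝ) ^ (-(1 / 2 : ℝ))) ≤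
      3 * Real.exp v := by
    calc (∑ y ∈ Finset.Icc (i + 1) x,
        Real.exp ((y : ℝ) ^ (1 / 2 : ℝ)) * ((max y 1 : ℕ) : ℝ) ^ (-(1 / 2 : ℝ)))
        ≤ ∑ y ∈ Finset.Icc 1 x,
          Real.exp ((y : ℝ) ^ (1 / 2 : ℝ)) * ((max y 1 : ℕ) : ℝ) ^ (-(1 / 2 : ℝ)) := by
          apply Finset.sum_le_sum_of_subset_of_nonneg
          · exact Finset.Icc_subset_Icc_left (by omega)
          · intro y _ _; positivity
      _ = ∑ y ∈ Finset.Icc 1 x, Real.exp (Real.sqrt y) * (Real.sqrt y)⁻¹ :=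
          Finset.sum_congr rfl fun y hy => term_rw (Finset.mem_Icc.mp hy).1
      _ ≤ 3 * Real.exp v := sum1_le x
  have hS2 : (∑ y ∈ Finset.Icc x (N ^ 2), Real.exp (-(y : ℝ) ^ (1 / 2 : ℝ))) ≤
      2 * ((u + 2) * Real.exp (-u)) := by
    calc (∑ y ∈ Finset.Icc x (N ^ 2), Real.exp (-(y : ℝ) ^ (1 / 2 : ℝ)))
        = ∑ y ∈ Finset.Icc x (N ^ 2), Real.exp (-Real.sqrt (y : ℝ)) := by
          apply Finset.sum_congr rfl
          intro y _
          rw [← Real.sqrt_eq_rpow]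
      _ ≤ 2 * ((u + 2) * Real.exp (-u)) := sum2_le x (N ^ 2) hx1 (by omega)
  have hS1nn : (0:ℝ) ≤ ∑ y ∈ Finset.Icc (i + 1) x,
      Real.exp ((y : ℝ) ^ (1 / 2 : ℝ)) * ((max y 1 : ℕ) : ℝ) ^ (-(1 / 2 : ℝ)) := by
    apply Finset.sum_nonneg; intro y _; positivity
  have hS2nn : (0:ℝ) ≤ ∑ y ∈ Finset.Icc x (N ^ 2), Real.exp (-(y : ℝ) ^ (1 / 2 : ℝ)) := by
    apply Finset.sum_nonneg; intro y _; positivity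
  have hmul : (∑ y ∈ Finset.Icc (i + 1) x,
        Real.exp ((y : ℝ) ^ (1 / 2 : ℝ)) * ((max y 1 : ℕ) : ℝ) ^ (-(1 / 2 : ℝ))) *
      (∑ y ∈ Finset.Icc x (N ^ 2), Real.exp (-(y : ℝ) ^ (1 / 2 : ℝ))) ≤
      (3 * Real.exp v) * (2 * ((u + 2) * Real.exp (-u))) :=
    mul_le_mul hS1 hS2 hS2nn (by positivity)
  -- numeric facts
  have hcx : ((x - 1 : ℕ) : ℝ) = (x : ℝ) - 1 := by
    have := Nat.cast_sub hx1 (R := ℝ); simpa using this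
  have hvu : v ≤ u + 2 := by
    have h1 : Real.sqrt ((x:ℝ) + 1) ≤ Real.sqrt (x:ℝ) + 1 := sqrt_succ_le (by positivity)
    have h2 : Real.sqrt (x:ℝ) ≤ u + 1 := by
      have : Real.sqrt (((x:ℝ) - 1) + 1) ≤ Real.sqrt ((x:ℝ) - 1) + 1 := by
        apply sqrt_succ_le
        have : (1:ℝ) ≤ (x:ℝ) := by exact_mod_cast hx1
        linarith
      rw [hu, hcx]
      simpa using this
    rw [hv]
    push_cast
    linarith
  have huN : u ≤ (N : ℝ) := by
    rw [hu]
    calc Real.sqrt ((x - 1 : ℕ) : ℝ) ≤ Real.sqrt ((N:ℝ) ^ 2) := by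
          apply Real.sqrt_le_sqrt
          rw [hcx]
          have : (x : ℝ) ≤ ((N ^ 2 : ℕ) : ℝ) := by exact_mod_cast hx2
          push_cast at this
          linarith
      _ = (N : ℝ) := Real.sqrt_sq (by positivity)
  have hprod : Real.exp v * Real.exp (-u) ≤ Real.exp 2 := by
    rw [← Real.exp_add]
    exact Real.exp_le_exp.mpr (by linarith)
  have hN1 : (1:ℝ) ≤ (N:ℝ) := by exact_mod_cast hN
  have hun : 0 ≤ u := Real.sqrt_nonneg _
  calc (∑ y ∈ Finset.Icc (i + 1) x,
        Real.exp ((y : ℝ) ^ (1 / 2 : ℝ)) * ((max y 1 : ℕ) : ℝ) ^ (-(1 / 2 : ℝ))) *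
      (∑ y ∈ Finset.Icc x (N ^ 2), Real.exp (-(y : ℝ) ^ (1 / 2 : ℝ)))
      ≤ (3 * Real.exp v) * (2 * ((u + 2) * Real.exp (-u))) := hmul
    _ = 6 * (u + 2) * (Real.exp v * Real.exp (-u)) := by ring
    _ ≤ 6 * (u + 2) * Real.exp 2 := by
        apply mul_le_mul_of_nonneg_left hprod (by positivity)
    _ ≤ 6 * ((N:ℝ) + 2) * 8 := by
        apply mul_le_mul (by nlinarith) exp_two_le (Real.exp_pos 2).le (by positivity)
    _ ≤ 200 * N := by nlinarith


private lemma term_rw' {y : ℕ} (hy : 1 ≤ y) :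
    Real.exp ((y : ℝ) ^ (1 / 2 : ℝ)) * ((max y 1 : ℕ) : ℝ) ^ (-(1 / 2 : ℝ)) =
      Real.exp (Real.sqrt y) * (Real.sqrt y)⁻¹ := by
  rw [max_eq_left hy, Real.rpow_neg (Nat.cast_nonneg y), ← Real.sqrt_eq_rpow]

private lemma Bplus_lower (N x : ℕ) (hx1 : 0 < x) (hx2 : x ≤ N ^ 2) :
    (∑ y ∈ Finset.Icc (0 + 1) x,
        Real.exp ((y : ℝ) ^ (1 / 2 : ℝ)) * ((max y 1 : ℕ) : ℝ) ^ (-(1 / 2 : ℝ))) *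
      (∑ y ∈ Finset.Icc x (N ^ 2), Real.exp (-(y : ℝ) ^ (1 / 2 : ℝ))) ≤ Bplus N 0 := by
  apply le_csSup
  · apply Set.Finite.bddAbove
    apply Set.Finite.image
    exact (Set.finite_Icc 0 (N ^ 2)).subset fun z hz => Set.mem_Icc.mpr ⟨Nat.zero_le _, hz.2⟩
  · exact ⟨x, ⟨hx1, hx2⟩, rfl⟩

private lemma lower_one : (1 : ℝ) / 200 ≤ Bplus 1 0 := by
  have h := Bplus_lower 1 1 (by norm_num) (by norm_num)
  norm_num [Real.one_rpow, ← Real.exp_add] at h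
  linarith

private lemma lower_main (N : ℕ) (hN : 2 ≤ N) : (N : ℝ) / 200 ≤ Bplus N 0 := by
  set m := N / 2 with hm
  obtain ⟨p, hp⟩ : ∃ p, m = p + 1 := ⟨m - 1, by omega⟩
  have hmN : m + 1 ≤ N := by omega
  have hNm : N ≤ 2 * m + 1 := by omega
  have hx2 : m ^ 2 ≤ N ^ 2 := Nat.pow_le_pow_left (by omega) 2
  have hmR : (1:ℝ) ≤ (m:ℝ) := by exact_mod_cast (by omega : 1 ≤ m)
  -- S1 lower bound
  have hS1 : Real.exp ((m:ℝ) - 1) ≤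
      ∑ y ∈ Finset.Icc (0 + 1) (m ^ 2),
        Real.exp ((y : ℝ) ^ (1 / 2 : ℝ)) * ((max y 1 : ℕ) : ℝ) ^ (-(1 / 2 : ℝ)) := by
    have hsub : Finset.Icc (p ^ 2 + 1) (m ^ 2) ⊆ Finset.Icc (0 + 1) (m ^ 2) :=
      Finset.Icc_subset_Icc_left (by omega)
    have hterm : ∀ y ∈ Finset.Icc (p ^ 2 + 1) (m ^ 2),
        Real.exp ((m:ℝ) - 1) * (m:ℝ)⁻¹ ≤
        Real.exp ((y : ℝ) ^ (1 / 2 : ℝ)) * ((max y 1 : ℕ) : ℝ) ^ (-(1 / 2 : ℝ)) := by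
      intro y hy
      obtain ⟨hy1, hy2⟩ := Finset.mem_Icc.mp hy
      have hy1' : 1 ≤ y := by omega
      rw [term_rw' hy1']
      have hpc : ((m:ℝ) - 1) = (p : ℝ) := by rw [hp]; push_cast; ring
      have ha : (m:ℝ) - 1 ≤ Real.sqrt y := by
        rw [hpc]
        calc (p:ℝ) = Real.sqrt ((p:ℝ) ^ 2) := (Real.sqrt_sq (by positivity)).symm
          _ ≤ Real.sqrt y := by
            apply Real.sqrt_le_sqrt
            have : ((p ^ 2 : ℕ) : ℝ) ≤ (y : ℝ) := by exact_mod_cast (by omega : p ^ 2 ≤ y)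
            push_cast at this; linarith
      have hb : Real.sqrt y ≤ (m:ℝ) := by
        calc Real.sqrt (y:ℝ) ≤ Real.sqrt ((m:ℝ) ^ 2) := by
              apply Real.sqrt_le_sqrt
              have : (y : ℝ) ≤ ((m ^ 2 : ℕ) : ℝ) := by exact_mod_cast hy2
              push_cast at this; linarith
          _ = (m:ℝ) := Real.sqrt_sq (by positivity)
      have hspos : (0:ℝ) < Real.sqrt y := by
        have : (1:ℝ) ≤ (y:ℝ) := by exact_mod_cast hy1'
        have := Real.one_le_sqrt.mpr this
        linarith
      have hinv : (m:ℝ)⁻¹ ≤ (Real.sqrt y)⁻¹ := by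
        apply inv_anti₀ hspos hb
      exact mul_le_mul (Real.exp_le_exp.mpr ha) hinv (by positivity) (Real.exp_pos _).le
    have hcard : (Finset.Icc (p ^ 2 + 1) (m ^ 2)).card = 2 * p + 1 := by
      rw [Nat.card_Icc]
      have h1 : m ^ 2 = p ^ 2 + 2 * p + 1 := by rw [hp]; ring
      omega
    have hsum := Finset.card_nsmul_le_sum (Finset.Icc (p ^ 2 + 1) (m ^ 2)) _ _ hterm
    rw [hcard, nsmul_eq_mul] at hsum
    have hnn : ∀ y ∈ Finset.Icc (0 + 1) (m ^ 2), y ∉ Finset.Icc (p ^ 2 + 1) (m ^ 2) →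
        (0:ℝ) ≤ Real.exp ((y : ℝ) ^ (1 / 2 : ℝ)) * ((max y 1 : ℕ) : ℝ) ^ (-(1 / 2 : ℝ)) := by
      intro y _ _; positivity
    have hmono := Finset.sum_le_sum_of_subset_of_nonneg hsub hnn
    have hfin : Real.exp ((m:ℝ) - 1) ≤ ((2 * p + 1 : ℕ) : ℝ) * (Real.exp ((m:ℝ) - 1) * (m:ℝ)⁻¹) := by
      have hmm : (m:ℝ) * (m:ℝ)⁻¹ = 1 := mul_inv_cancel₀ (by linarith)
      have hcast : ((2 * p + 1 : ℕ) : ℝ) = 2 * (p:ℝ) + 1 := by push_cast; ring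
      have hmp : (m:ℝ) = (p:ℝ) + 1 := by rw [hp]; push_cast; ring
      rw [hcast]
      have hid : (2 * (p:ℝ) + 1) * (Real.exp ((m:ℝ) - 1) * (m:ℝ)⁻¹) =
          Real.exp ((m:ℝ) - 1) * ((m:ℝ) * (m:ℝ)⁻¹) + (p:ℝ) * (Real.exp ((m:ℝ) - 1) * (m:ℝ)⁻¹) := by
        rw [hmp]; ring
      rw [hid, hmm, mul_one]
      have h0 : (0:ℝ) ≤ (p:ℝ) * (Real.exp ((m:ℝ) - 1) * (m:ℝ)⁻¹) := by positivity
      linarith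
    calc Real.exp ((m:ℝ) - 1) ≤ ((2 * p + 1 : ℕ) : ℝ) * (Real.exp ((m:ℝ) - 1) * (m:ℝ)⁻¹) := hfin
      _ ≤ ∑ y ∈ Finset.Icc (p ^ 2 + 1) (m ^ 2),
          Real.exp ((y : ℝ) ^ (1 / 2 : ℝ)) * ((max y 1 : ℕ) : ℝ) ^ (-(1 / 2 : ℝ)) := hsum
      _ ≤ _ := hmono
  -- S2 lower bound
  have hS2 : 2 * ((m:ℝ) + 1) * Real.exp (-((m:ℝ) + 1)) ≤
      ∑ y ∈ Finset.Icc (m ^ 2) (N ^ 2), Real.exp (-(y : ℝ) ^ (1 / 2 : ℝ)) := by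
    have hsub : Finset.Icc (m ^ 2) ((m + 1) ^ 2) ⊆ Finset.Icc (m ^ 2) (N ^ 2) :=
      Finset.Icc_subset_Icc_right (Nat.pow_le_pow_left hmN 2)
    have hterm : ∀ y ∈ Finset.Icc (m ^ 2) ((m + 1) ^ 2),
        Real.exp (-((m:ℝ) + 1)) ≤ Real.exp (-(y : ℝ) ^ (1 / 2 : ℝ)) := by
      intro y hy
      obtain ⟨_, hy2⟩ := Finset.mem_Icc.mp hy
      rw [← Real.sqrt_eq_rpow]
      apply Real.exp_le_exp.mpr
      apply neg_le_neg
      calc Real.sqrt (y:ℝ) ≤ Real.sqrt (((m:ℝ) + 1) ^ 2) := by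
            apply Real.sqrt_le_sqrt
            have : (y : ℝ) ≤ (((m + 1) ^ 2 : ℕ) : ℝ) := by exact_mod_cast hy2
            push_cast at this; linarith
        _ = (m:ℝ) + 1 := Real.sqrt_sq (by positivity)
    have hcard : (Finset.Icc (m ^ 2) ((m + 1) ^ 2)).card = 2 * m + 2 := by
      rw [Nat.card_Icc]
      have h1 : (m + 1) ^ 2 = m ^ 2 + 2 * m + 1 := by ring
      omega
    have hsum := Finset.card_nsmul_le_sum (Finset.Icc (m ^ 2) ((m + 1) ^ 2)) _ _ hterm
    rw [hcard, nsmul_eq_mul] at hsum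
    have hmono : ∑ y ∈ Finset.Icc (m ^ 2) ((m + 1) ^ 2), Real.exp (-(y : ℝ) ^ (1 / 2 : ℝ)) ≤
        ∑ y ∈ Finset.Icc (m ^ 2) (N ^ 2), Real.exp (-(y : ℝ) ^ (1 / 2 : ℝ)) := by
      apply Finset.sum_le_sum_of_subset_of_nonneg hsub
      intro y _ _; positivity
    have hcast : ((2 * m + 2 : ℕ) : ℝ) = 2 * ((m:ℝ) + 1) := by push_cast; ring
    rw [hcast] at hsum
    linarith
  -- combine
  have hS1nn : (0:ℝ) ≤ 2 * ((m:ℝ) + 1) * Real.exp (-((m:ℝ) + 1)) := by positivity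
  have key := Bplus_lower N (m ^ 2) (by rw [hp]; positivity) hx2
  have hmul : Real.exp ((m:ℝ) - 1) * (2 * ((m:ℝ) + 1) * Real.exp (-((m:ℝ) + 1))) ≤
      (∑ y ∈ Finset.Icc (0 + 1) (m ^ 2),
        Real.exp ((y : ℝ) ^ (1 / 2 : ℝ)) * ((max y 1 : ℕ) : ℝ) ^ (-(1 / 2 : ℝ))) *
      (∑ y ∈ Finset.Icc (m ^ 2) (N ^ 2), Real.exp (-(y : ℝ) ^ (1 / 2 : ℝ))) := by
    apply mul_le_mul hS1 hS2 hS1nn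
    exact le_trans (Real.exp_pos _).le hS1
  have hexp8 : (1:ℝ) / 8 ≤ Real.exp (-2) := by
    have h1 : Real.exp 2 = Real.exp 1 * Real.exp 1 := by rw [← Real.exp_add]; norm_num
    have h2 : Real.exp 2 ≤ 8 := by nlinarith [Real.exp_one_lt_d9, Real.exp_pos 1]
    have h3 : Real.exp (-2) * Real.exp 2 = 1 := by rw [← Real.exp_add]; norm_num
    nlinarith [Real.exp_pos (-2)]
  have hlow : (N : ℝ) / 200 ≤ Real.exp ((m:ℝ) - 1) * (2 * ((m:ℝ) + 1) * Real.exp (-((m:ℝ) + 1))) := by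
    have hNR : (N:ℝ) ≤ 2 * (m:ℝ) + 1 := by exact_mod_cast hNm
    calc (N : ℝ) / 200 ≤ 2 * ((m:ℝ) + 1) * (1 / 8) := by linarith
      _ ≤ 2 * ((m:ℝ) + 1) * Real.exp (-2) := by
          apply mul_le_mul_of_nonneg_left hexp8 (by linarith)
      _ = Real.exp ((m:ℝ) - 1) * (2 * ((m:ℝ) + 1) * Real.exp (-((m:ℝ) + 1))) := by
          rw [show (-2:ℝ) = ((m:ℝ) - 1) + (-((m:ℝ) + 1)) by ring, Real.exp_add]; ring
  linarith


/-- There is `k ≥ 1` such that for every `N ≥ 1`: `B₊(N,i) ≤ k N` for all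
`0 ≤ i < N²`, and `B₊(N,0) ≥ N/k`. -/
theorem Bplus_order_N_dim_two :
    ∃ k : ℝ, 1 ≤ k ∧ ∀ N : ℕ, 1 ≤ N →
      (∀ i : ℕ, i < N ^ 2 → Bplus N i ≤ k * N) ∧ (N : ℝ) / k ≤ Bplus N 0 := by
  refine ⟨200, by norm_num, fun N hN => ⟨fun i hi => ?_, ?_⟩⟩
  · -- upper bound
    apply csSup_le
    · exact ⟨_, ⟨N ^ 2, ⟨hi, le_rfl⟩, rfl⟩⟩
    · rintro v ⟨x, ⟨hx1, hx2⟩, rfl⟩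
      exact value_le N x i (by omega) hx2 hN
  · rcases Nat.lt_or_ge N 2 with h | h
    · have hN1 : N = 1 := by omega
      subst hN1
      exact_mod_cast lower_one
    · exact lower_main N h

end
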